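/- Let Γ be a strictly Deza graph with parameters (n, k, b, a) with k = b + 1 and β(v) > 1 for every vertex v. Then for any two vertices u and v of Γ, if B[v] ∩ B[u] ≠ ∅ then B[v] = B[u]; that is, the sets B[v] form a partition of the vertex set of Γ. -/

import Mathlib

open Finset SimpleGraph

universe u v

/-- The number of common neighbours of two vertices. -/
def commonNbrs {V : Type u} [Fintype V] [DecidableEq V] (G : SimpleGraph V)
    [DecidableRel G.Adj] (x y : V) : ℕ :=
  (G.neighborFinset x ∩ G.neighborFinset y).card

/-- `G` is a Deza graph with parameters `(n, k, b, a)`: a nonempty `k`-regular graph on `n`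
vertices in which any two distinct vertices have either `b` or `a` common neighbours,
where `b ≥ a`. -/
def IsDezaGraph {V : Type u} [Fintype V] [DecidableEq V] (G : SimpleGraph V)
    [DecidableRel G.Adj] (n k b a : ℕ) : Prop :=
  G ≠ ⊥ ∧ Fintype.card V = n ∧ G.IsRegularOfDegree k ∧ a ≤ b ∧
    ∀ x y : V, x ≠ y → commonNbrs G x y = b ∨ commonNbrs G x y = a

/-- `G` is a strictly Deza graph with parameters `(n, k, b, a)`: a Deza graph of
diameter 2 that is not strongly regular. -/
def IsStrictlyDezaGraph {V : Type u} [Fintype V] [DecidableEq V] (G : SimpleGraph V)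
    [DecidableRel G.Adj] (n k b a : ℕ) : Prop :=
  IsDezaGraph G n k b a ∧ G.Connected ∧ (∀ x y : V, G.dist x y ≤ 2) ∧
    (∃ x y : V, G.dist x y = 2) ∧ ¬ ∃ ℓ μ : ℕ, G.IsSRGWith n k ℓ μ

/-- `B(v)`: the set of vertices `u ≠ v` having exactly `b` common neighbours with `v`. -/
def dezaB {V : Type u} [Fintype V] [DecidableEq V] (G : SimpleGraph V)
    [DecidableRel G.Adj] (b : ℕ) (v : V) : Finset V :=
  univ.filter fun u => u ≠ v ∧ commonNbrs G u v = b

/-- `A(v)`: the set of vertices `u ≠ v` having exactly `a` common neighbours with `v`. -/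
def dezaA {V : Type u} [Fintype V] [DecidableEq V] (G : SimpleGraph V)
    [DecidableRel G.Adj] (a : ℕ) (v : V) : Finset V :=
  univ.filter fun u => u ≠ v ∧ commonNbrs G u v = a

/-- `B[v] = B(v) ∪ {v}`. -/
def dezaBc {V : Type u} [Fintype V] [DecidableEq V] (G : SimpleGraph V)
    [DecidableRel G.Adj] (b : ℕ) (v : V) : Finset V :=
  insert v (dezaB G b v)

/-- A vertex `v` is of type (A) if `B(v) ∩ N(v) = ∅`. -/
def IsTypeA {V : Type u} [Fintype V] [DecidableEq V] (G : SimpleGraph V)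
    [DecidableRel G.Adj] (b : ℕ) (v : V) : Prop :=
  dezaB G b v ∩ G.neighborFinset v = ∅

/-- A vertex `v` is of type (B) if `B(v) ⊆ N(v)`. -/
def IsTypeB {V : Type u} [Fintype V] [DecidableEq V] (G : SimpleGraph V)
    [DecidableRel G.Adj] (b : ℕ) (v : V) : Prop :=
  dezaB G b v ⊆ G.neighborFinset v

/-- A vertex `v` is of type (C) if `|B(v) ∩ N(v)| = 1`. -/
def IsTypeC {V : Type u} [Fintype V] [DecidableEq V] (G : SimpleGraph V)
    [DecidableRel G.Adj] (b : ℕ) (v : V) : Prop :=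
  (dezaB G b v ∩ G.neighborFinset v).card = 1

/-- A vertex `x` of type (A) is of type (A1) if there exists `y ∈ N(x)` with
`N(x) \ N(xᵢ) = {y}` for every `xᵢ ∈ B(x)`. -/
def IsTypeA1 {V : Type u} [Fintype V] [DecidableEq V] (G : SimpleGraph V)
    [DecidableRel G.Adj] (b : ℕ) (x : V) : Prop :=
  IsTypeA G b x ∧ ∃ y ∈ G.neighborFinset x,
    ∀ xi ∈ dezaB G b x, G.neighborFinset x \ G.neighborFinset xi = {y}

/-- A vertex `x` of type (A) is of type (A2) if there exists `z ∉ N[x]` with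
`N(xᵢ) \ N(x) = {z}` for every `xᵢ ∈ B(x)`. -/
def IsTypeA2 {V : Type u} [Fintype V] [DecidableEq V] (G : SimpleGraph V)
    [DecidableRel G.Adj] (b : ℕ) (x : V) : Prop :=
  IsTypeA G b x ∧ ∃ z ∉ insert x (G.neighborFinset x),
    ∀ xi ∈ dezaB G b x, G.neighborFinset xi \ G.neighborFinset x = {z}

/-- The complete multipartite graph with `m` parts of size `t`. -/
def completeMultipartiteGr (m t : ℕ) : SimpleGraph (Fin m × Fin t) where
  Adj u v := u.1 ≠ v.1
  symm := ⟨fun _ _ h => Ne.symm h⟩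
  loopless := ⟨fun _ h => h rfl⟩

/-- The 2-clique extension of a graph `H`: vertices `(u, i)` and `(v, j)` are adjacent
iff `u ~ v` in `H`, or `u = v` and `i ≠ j`. -/
def cliqueExt2 {W : Type v} (H : SimpleGraph W) : SimpleGraph (W × Fin 2) where
  Adj u v := H.Adj u.1 v.1 ∨ (u.1 = v.1 ∧ u.2 ≠ v.2)
  symm := by
    constructor
    intro u v h
    rcases h with h | ⟨h1, h2⟩
    · exact Or.inl h.symm
    · exact Or.inr ⟨h1.symm, h2.symm⟩
  loopless := by
    constructor
    intro u h
    rcases h with h | ⟨_, h2⟩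
    · exact H.irrefl h
    · exact h2 rfl

/-!
Since `k = b + 1`, a vertex `u ∈ B(x)` sees all but one neighbour of `x`. For two vertices
`u, w ∈ B(x)`, the case analysis on their adjacency to `x` shows that `u` and `w` again share
`b` neighbours: if one of them is adjacent to `x`, the missing neighbours can be controlled
exactly, and if neither is, a common neighbour `z` of `x, u, w` (which exists when `b ≥ 2`) would
have three neighbours `x, u, w` outside `N(x)`, too many. Hence "`u = v` or `u ∈ B(v)`" is an
equivalence relation whose classes are the sets `B[v]`. The cases `a = b` and `b = 1` are
excluded because they force a strongly regular graph (for `b = 1`, the pentagon).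
-/

lemma SimpleGraph.Reachable.mem_of_forall_adj_mem {V : Type*} {G : SimpleGraph V} {S : Set V}
    (hS : ∀ ⦃m r⦄, m ∈ S → G.Adj m r → r ∈ S) {v r : V} (h : G.Reachable v r) (hv : v ∈ S) :
    r ∈ S := by
  obtain ⟨p⟩ := h
  induction p with
  | nil => exact hv
  | cons hadj _ ih => exact ih (hS hv hadj)

section

variable {V : Type u} [Fintype V] [DecidableEq V] {G : SimpleGraph V} [DecidableRel G.Adj]
  {a b : ℕ}

lemma commonNbrs_comm (x y : V) : commonNbrs G x y = commonNbrs G y x := by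
  rw [commonNbrs, commonNbrs, inter_comm]

lemma commonNbrs_self (x : V) : commonNbrs G x x = G.degree x := by
  rw [commonNbrs, inter_self, card_neighborFinset_eq_degree]

lemma commonNbrs_pos_iff {x y : V} : 0 < commonNbrs G x y ↔ ∃ m, G.Adj x m ∧ G.Adj y m := by
  simp [commonNbrs, card_pos, Finset.Nonempty]

lemma card_commonNeighbors_eq_commonNbrs (x y : V) :
    Fintype.card (G.commonNeighbors x y) = commonNbrs G x y := by
  rw [commonNbrs, ← Set.toFinset_card]
  congr 1
  ext z
  simp [mem_commonNeighbors]

lemma isSRGWith_of_commonNbrs {n k ℓ μ : ℕ} (hn : Fintype.card V = n)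
    (hreg : G.IsRegularOfDegree k) (hadj : ∀ v w, G.Adj v w → commonNbrs G v w = ℓ)
    (hnadj : ∀ v w, v ≠ w → ¬ G.Adj v w → commonNbrs G v w = μ) : G.IsSRGWith n k ℓ μ where
  card := hn
  regular := hreg
  of_adj v w h := by rw [card_commonNeighbors_eq_commonNbrs, hadj v w h]
  of_not_adj v w hne h := by rw [card_commonNeighbors_eq_commonNbrs, hnadj v w hne h]

lemma eq_or_eq_of_adj_of_degree_eq_two {m p q r : V} (hm : G.degree m = 2) (hpq : p ≠ q)
    (hp : G.Adj m p) (hq : G.Adj m q) (hr : G.Adj m r) : r = p ∨ r = q := by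
  have hN : G.neighborFinset m = {p, q} :=
    (eq_of_subset_of_card_le (by simp [insert_subset_iff, hp, hq])
      (by rw [card_pair hpq, card_neighborFinset_eq_degree, hm])).symm
  simpa [hN] using (G.mem_neighborFinset m r).mpr hr

lemma eq_top_of_isRegularOfDegree_two_of_triangle (hreg : G.IsRegularOfDegree 2)
    (hconn : G.Connected) {v s t : V} (hvs : G.Adj v s) (hvt : G.Adj v t) (hst : G.Adj s t) :
    G = ⊤ := by
  have hclique := (is3Clique_triple_iff.mpr ⟨hvs, hvt, hst⟩).isClique
  have hclosed : ∀ ⦃m r⦄, m ∈ (({v, s, t} : Finset V) : Set V) → G.Adj m r →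
      r ∈ (({v, s, t} : Finset V) : Set V) := by
    intro m r hm hr
    simp only [coe_insert, coe_singleton, Set.mem_insert_iff, Set.mem_singleton_iff] at hm ⊢
    rcases hm with rfl | rfl | rfl
    · have := eq_or_eq_of_adj_of_degree_eq_two (hreg m) hst.ne hvs hvt hr
      tauto
    · have := eq_or_eq_of_adj_of_degree_eq_two (hreg m) hvt.ne hvs.symm hst hr
      tauto
    · have := eq_or_eq_of_adj_of_degree_eq_two (hreg m) hvs.ne hvt.symm hst.symm hr
      tauto
  ext α β
  have hv : v ∈ (({v, s, t} : Finset V) : Set V) := by simp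
  exact ⟨G.ne_of_adj, hclique ((hconn v α).mem_of_forall_adj_mem hclosed hv)
    ((hconn v β).mem_of_forall_adj_mem hclosed hv)⟩

lemma isSRGWith_two_zero_one {n : ℕ} (hn : Fintype.card V = n) (hreg : G.IsRegularOfDegree 2)
    (hdeza : ∀ x y : V, x ≠ y → commonNbrs G x y = 1 ∨ commonNbrs G x y = 0)
    (hconn : G.Connected) (hdiam : ∀ x y : V, G.dist x y ≤ 2)
    (hd2 : ∃ x y : V, G.dist x y = 2) : G.IsSRGWith n 2 0 1 := by
  refine isSRGWith_of_commonNbrs hn hreg (fun v t hvt => ?_) (fun v t hne hvt => ?_)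
  · refine (hdeza v t hvt.ne).resolve_left fun h1 => ?_
    obtain ⟨s, hvs, hts⟩ := commonNbrs_pos_iff.mp (h1 ▸ one_pos)
    obtain ⟨α, β, hαβ⟩ := hd2
    have hne : α ≠ β := by
      rintro rfl
      simp at hαβ
    have hadj : G.Adj α β := by
      rw [eq_top_of_isRegularOfDegree_two_of_triangle hreg hconn hvt hvs hts]
      exact hne
    rw [dist_eq_one_iff_adj.mpr hadj] at hαβ
    omega
  · refine (hdeza v t hne).resolve_right fun h0 => ?_
    have hcommon : (G.commonNeighbors v t).Nonempty := by
      by_contra h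
      have h2 : 2 < G.edist v t :=
        two_lt_edist_iff.mpr ⟨hne, hvt, Set.not_nonempty_iff_eq_empty.mp h⟩
      rw [← (hconn v t).coe_dist_eq_edist] at h2
      exact (hdiam v t).not_gt (by exact_mod_cast h2)
    obtain ⟨m, hm⟩ := hcommon
    rw [mem_commonNeighbors] at hm
    exact (commonNbrs_pos_iff.mpr ⟨m, hm⟩).ne' h0

lemma ne_of_commonNbrs_eq (hreg : G.IsRegularOfDegree (b + 1)) {x y : V}
    (h : commonNbrs G x y = b) : x ≠ y := by
  rintro rfl
  rw [commonNbrs_self, hreg x] at h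
  omega

lemma inter_neighborFinset_eq_erase (hreg : G.IsRegularOfDegree (b + 1)) {x u y : V}
    (hxu : commonNbrs G x u = b) (hxy : G.Adj x y) (huy : ¬ G.Adj u y) :
    G.neighborFinset x ∩ G.neighborFinset u = (G.neighborFinset x).erase y := by
  refine eq_of_subset_of_card_le (fun z hz => ?_) ?_
  · rw [mem_inter, mem_neighborFinset, mem_neighborFinset] at hz
    exact mem_erase.mpr ⟨fun h => huy (h ▸ hz.2), (G.mem_neighborFinset x z).mpr hz.1⟩
  · rw [card_erase_of_mem ((G.mem_neighborFinset x y).mpr hxy), card_neighborFinset_eq_degree,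
      hreg x]
    exact (hxu.trans (Nat.add_sub_cancel b 1).symm).ge

lemma le_card_inter_inter_add_one (hreg : G.IsRegularOfDegree (b + 1)) {x u w : V}
    (hxu : commonNbrs G x u = b) (hxw : commonNbrs G x w = b) :
    b ≤ #(G.neighborFinset x ∩ G.neighborFinset u ∩ G.neighborFinset w) + 1 := by
  have hunion : #(G.neighborFinset x ∩ G.neighborFinset u ∪
      G.neighborFinset x ∩ G.neighborFinset w) ≤ b + 1 := by
    rw [← hreg x, ← card_neighborFinset_eq_degree]
    exact card_le_card (union_subset inter_subset_left inter_subset_left)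
  have := card_inter_add_card_union (G.neighborFinset x ∩ G.neighborFinset u)
    (G.neighborFinset x ∩ G.neighborFinset w)
  rw [← inter_inter_distrib_left, ← inter_assoc] at this
  unfold commonNbrs at hxu hxw
  omega

lemma le_commonNbrs_of_adj_of_adj (hreg : G.IsRegularOfDegree (b + 1)) {x u w : V}
    (hxu : commonNbrs G x u = b) (hxw : commonNbrs G x w = b) (hu : G.Adj x u)
    (hw : G.Adj x w) : b ≤ commonNbrs G u w := by
  have hsub : insert x (G.neighborFinset x ∩ G.neighborFinset u ∩ G.neighborFinset w) ⊆
      G.neighborFinset u ∩ G.neighborFinset w :=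
    insert_subset (by simp [hu.symm, hw.symm]) (by rw [inter_assoc]; exact inter_subset_right)
  have := card_le_card hsub
  rw [card_insert_of_notMem (by simp)] at this
  have := le_card_inter_inter_add_one hreg hxu hxw
  unfold commonNbrs
  omega

lemma le_commonNbrs_of_adj_of_not_adj (hreg : G.IsRegularOfDegree (b + 1)) {x u w : V}
    (hxu : commonNbrs G x u = b) (hxw : commonNbrs G x w = b) (hu : G.Adj x u)
    (hw : ¬ G.Adj x w) : b ≤ commonNbrs G u w := by
  have hux : G.neighborFinset u ∩ G.neighborFinset x = (G.neighborFinset u).erase x :=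
    inter_neighborFinset_eq_erase hreg (by rwa [commonNbrs_comm]) hu.symm G.irrefl
  have hwu : ¬ G.Adj w u := fun h => by
    have : w ∈ G.neighborFinset u ∩ G.neighborFinset x :=
      hux ▸ mem_erase.mpr ⟨(ne_of_commonNbrs_eq hreg hxw).symm, by simpa using h.symm⟩
    simp only [mem_inter, mem_neighborFinset] at this
    exact hw this.2
  have hxwu : G.neighborFinset x ∩ G.neighborFinset w =
      G.neighborFinset x ∩ G.neighborFinset u := by
    rw [inter_neighborFinset_eq_erase hreg hxw hu hwu,
      inter_neighborFinset_eq_erase hreg hxu hu G.irrefl]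
  calc b = #(G.neighborFinset x ∩ G.neighborFinset w) := hxw.symm
    _ ≤ commonNbrs G u w := card_le_card fun z hz => by
      have hz' := hxwu ▸ hz
      simp only [mem_inter] at hz hz' ⊢
      exact ⟨hz'.2, hz.2⟩

lemma le_commonNbrs_of_not_adj_of_not_adj (hreg : G.IsRegularOfDegree (b + 1))
    (hdeza : ∀ x y : V, x ≠ y → commonNbrs G x y = b ∨ commonNbrs G x y = a) (hb : 2 ≤ b)
    {x u w : V} (hxu : commonNbrs G x u = b) (hxw : commonNbrs G x w = b) (huw : u ≠ w)
    (hu : ¬ G.Adj x u) (hw : ¬ G.Adj x w) : b ≤ commonNbrs G u w := by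
  by_contra! hlt
  have hua : commonNbrs G u w = a := (hdeza u w huw).resolve_left hlt.ne
  have hbound := le_card_inter_inter_add_one hreg hxu hxw
  have hsub := card_le_card (s := G.neighborFinset x ∩ G.neighborFinset u ∩ G.neighborFinset w)
    (t := G.neighborFinset u ∩ G.neighborFinset w) (by rw [inter_assoc]; exact inter_subset_right)
  obtain ⟨z, hz⟩ : (G.neighborFinset x ∩ G.neighborFinset u ∩ G.neighborFinset w).Nonempty :=
    card_pos.mp (by omega)
  simp only [mem_inter, mem_neighborFinset] at hz
  obtain ⟨⟨hxz, huz⟩, hwz⟩ := hz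
  have hout : {x, u, w} ⊆ G.neighborFinset z \ G.neighborFinset x := by
    simp [insert_subset_iff, hxz.symm, huz.symm, hwz.symm, hu, hw]
  have hthree : #({x, u, w} : Finset V) = 3 := card_eq_three.mpr
    ⟨x, u, w, ne_of_commonNbrs_eq hreg hxu, ne_of_commonNbrs_eq hreg hxw, huw, rfl⟩
  have hzx : b ≤ commonNbrs G z x + 1 := by
    rcases hdeza z x hxz.ne' with h | h <;> unfold commonNbrs at * <;> omega
  have := card_sdiff_add_card_inter (G.neighborFinset z) (G.neighborFinset x)
  have := card_le_card hout
  rw [card_neighborFinset_eq_degree, hreg z] at *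
  unfold commonNbrs at hzx
  omega

lemma commonNbrs_eq_of_commonNbrs_eq (hreg : G.IsRegularOfDegree (b + 1))
    (hab : a ≤ b) (hb : 2 ≤ b)
    (hdeza : ∀ x y : V, x ≠ y → commonNbrs G x y = b ∨ commonNbrs G x y = a) {x u w : V}
    (hxu : commonNbrs G x u = b) (hxw : commonNbrs G x w = b) (huw : u ≠ w) :
    commonNbrs G u w = b := by
  suffices b ≤ commonNbrs G u w by rcases hdeza u w huw with h | h <;> omega
  by_cases hu : G.Adj x u <;> by_cases hw : G.Adj x w
  · exact le_commonNbrs_of_adj_of_adj hreg hxu hxw hu hw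
  · exact le_commonNbrs_of_adj_of_not_adj hreg hxu hxw hu hw
  · rw [commonNbrs_comm]
    exact le_commonNbrs_of_adj_of_not_adj hreg hxw hxu hw hu
  · exact le_commonNbrs_of_not_adj_of_not_adj hreg hdeza hb hxu hxw huw hu hw

lemma mem_dezaBc {u x : V} : u ∈ dezaBc G b x ↔ u = x ∨ commonNbrs G u x = b := by
  by_cases h : u = x <;> simp [dezaBc, dezaB, h]

lemma dezaBc_eq_of_inter_nonempty
    (heuc : ∀ x u w, u ∈ dezaBc G b x → w ∈ dezaBc G b x → u ∈ dezaBc G b w) {x y : V}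
    (h : (dezaBc G b x ∩ dezaBc G b y).Nonempty) : dezaBc G b x = dezaBc G b y := by
  have hsymm : ∀ {u v}, u ∈ dezaBc G b v → v ∈ dezaBc G b u :=
    fun hu => heuc _ _ _ (mem_insert_self _ _) hu
  obtain ⟨z, hz⟩ := h
  rw [mem_inter] at hz
  ext t
  exact ⟨fun ht => heuc z t y (heuc x t z ht hz.1) (hsymm hz.2),
    fun ht => heuc z t x (heuc y t z ht hz.2) (hsymm hz.1)⟩

lemma mem_dezaBc_of_mem_dezaBc (hreg : G.IsRegularOfDegree (b + 1)) (hab : a ≤ b)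
    (hb : 2 ≤ b) (hdeza : ∀ x y : V, x ≠ y → commonNbrs G x y = b ∨ commonNbrs G x y = a)
    {x u w : V} (hu : u ∈ dezaBc G b x) (hw : w ∈ dezaBc G b x) : u ∈ dezaBc G b w := by
  rw [mem_dezaBc] at hu hw ⊢
  rcases hu with rfl | hu
  · rw [commonNbrs_comm] at hw
    tauto
  rcases hw with rfl | hw
  · exact .inr hu
  by_cases huw : u = w
  · exact .inl huw
  rw [commonNbrs_comm] at hu hw
  exact .inr (commonNbrs_eq_of_commonNbrs_eq hreg hab hb hdeza hu hw huw)

end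

theorem stmt14_general {V : Type u} [Fintype V] [DecidableEq V] (G : SimpleGraph V)
    [DecidableRel G.Adj] (n k b a : ℕ)
    (hG : IsStrictlyDezaGraph G n k b a) (hk : k = b + 1) :
    ∀ x y : V, (dezaBc G b x ∩ dezaBc G b y).Nonempty →
      dezaBc G b x = dezaBc G b y := by
  obtain ⟨⟨-, hn, hreg, hab, hdeza⟩, hconn, hdiam, hd2, hnsrg⟩ := hG
  subst hk
  have hab : a < b := hab.lt_of_ne fun h => by
    subst h
    exact hnsrg ⟨a, a, isSRGWith_of_commonNbrs hn hreg
      (fun v w hvw => (hdeza v w hvw.ne).elim id id) (fun v w hvw _ => (hdeza v w hvw).elim id id)⟩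
  have hb : 2 ≤ b := by
    by_contra! hb
    obtain rfl : b = 1 := by omega
    obtain rfl : a = 0 := by omega
    exact hnsrg ⟨0, 1, isSRGWith_two_zero_one hn hreg hdeza hconn hdiam hd2⟩
  exact fun x y => dezaBc_eq_of_inter_nonempty fun _ _ _ =>
    mem_dezaBc_of_mem_dezaBc hreg hab.le hb hdeza

theorem stmt14 {V : Type u} [Fintype V] [DecidableEq V] (G : SimpleGraph V)
    [DecidableRel G.Adj] (n k b a : ℕ)
    (hG : IsStrictlyDezaGraph G n k b a) (hk : k = b + 1)
    (hβ : ∀ v : V, 1 < (dezaB G b v).card) :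
    ∀ x y : V, (dezaBc G b x ∩ dezaBc G b y).Nonempty →
      dezaBc G b x = dezaBc G b y :=
  stmt14_general G n k b a hG hk
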